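/- Let τ be a δ-invariant σ-trace on an H-module algebra A, and for h¹,…,hⁿ ∈ H define the n-cochain γ(h¹⊗…⊗hⁿ)(x⁰,…,xⁿ) = τ(x⁰ h¹(x¹) ⋯ hⁿ(xⁿ)). Then γ intertwines the cyclic operator with the cyclic permutation of arguments: γ(τₙ(h¹⊗…⊗hⁿ))(x⁰, x¹, …, xⁿ) = γ(h¹⊗…⊗hⁿ)(xⁿ, x⁰, …, x^{n-1}) for all x⁰,…,xⁿ ∈ A. -/

import Mathlib

open scoped TensorProduct

variable (k H : Type) [Field k] [Ring H] [HopfAlgebra k H]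

/-- The tensor powers `H^{⊗n}` of `H` (bundled with their componentwise ring and
algebra structures), realized as iterated binary tensor products
`H^{⊗0} = k`, `H^{⊗(n+1)} = H ⊗ H^{⊗n}`. -/
noncomputable def TpowBundle :
    (n : ℕ) → Σ' (T : Type), Σ' (R : Ring T), @Algebra k T _ R.toSemiring
  | 0 => ⟨k, inferInstance, inferInstance⟩
  | n + 1 =>
    letI p := TpowBundle n
    letI : Ring p.1 := p.2.1
    letI : Algebra k p.1 := p.2.2
    ⟨H ⊗[k] p.1, inferInstance, inferInstance⟩

/-- The tensor power `H^{⊗n}`; the componentwise product of elementary tensors is the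
ring multiplication `*` of `Tpow k H n`. -/
noncomputable def Tpow (n : ℕ) : Type := (TpowBundle k H n).1

noncomputable instance instTpowRing (n : ℕ) : Ring (Tpow k H n) := (TpowBundle k H n).2.1
noncomputable instance instTpowAlgebra (n : ℕ) : Algebra k (Tpow k H n) :=
  (TpowBundle k H n).2.2

/-- The elementary tensor `h¹ ⊗ h² ⊗ … ⊗ hⁿ ∈ H^{⊗n}` associated to a tuple
`(h¹, …, hⁿ)`. -/
noncomputable def el : (n : ℕ) → (Fin n → H) → Tpow k H n
  | 0, _ => (1 : k)
  | n + 1, f => show H ⊗[k] Tpow k H n from f 0 ⊗ₜ[k] el n (fun i => f i.succ)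

/-- The `δ`-twisted antipode `S̃(h) = Σ δ(h₍₁₎) S(h₍₂₎)` of `H` with character `δ`. -/
noncomputable def twistedAntipode (δ : H →ₐ[k] k) : H →ₗ[k] H :=
  (TensorProduct.lid k H).toLinearMap
    ∘ₗ TensorProduct.map δ.toLinearMap (HopfAlgebra.antipode (R := k))
    ∘ₗ Coalgebra.comul

/-- The iterated coproduct `Δ^n : H → H^{⊗(n+1)}`, with `Δ⁰ = id` and
`Δ^{n+1} = (id ⊗ Δ^n) ∘ Δ` (Sweedler notation: `Δ^{n-1} h = Σ h₍₁₎ ⊗ … ⊗ h₍ₙ₎ ∈ H^{⊗n}`). -/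
noncomputable def iterComul : (n : ℕ) → H →ₗ[k] Tpow k H (n + 1)
  | 0 => (TensorProduct.mk k H k).flip 1
  | n + 1 =>
    (TensorProduct.map LinearMap.id (iterComul n) ∘ₗ Coalgebra.comul :
      H →ₗ[k] H ⊗[k] Tpow k H (n + 1))

/-- Appending a fixed element `a ∈ H` as a last tensor factor,
`h¹ ⊗ … ⊗ hⁿ ↦ h¹ ⊗ … ⊗ hⁿ ⊗ a`, as a linear map `H^{⊗n} → H^{⊗(n+1)}`. -/
noncomputable def appendEnd (a : H) : (n : ℕ) → Tpow k H n →ₗ[k] Tpow k H (n + 1)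
  | 0 => (LinearMap.toSpanSingleton k _ (a ⊗ₜ[k] (1 : k)) : k →ₗ[k] H ⊗[k] k)
  | n + 1 =>
    (TensorProduct.map LinearMap.id (appendEnd a n) :
      H ⊗[k] Tpow k H n →ₗ[k] H ⊗[k] Tpow k H (n + 1))

/-- The cyclic operator `τₙ : H^{⊗n} → H^{⊗n}`,
`τₙ(h¹ ⊗ … ⊗ hⁿ) = (Δ^{n-1} S̃(h¹)) · (h² ⊗ … ⊗ hⁿ ⊗ σ)`, where `·` is the
componentwise product of `H^{⊗n}` (on `H^{⊗0} = k` it is the identity). -/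
noncomputable def cyc (δ : H →ₐ[k] k) (σ : H) : (n : ℕ) → Tpow k H n →ₗ[k] Tpow k H n
  | 0 => LinearMap.id
  | n + 1 =>
    (LinearMap.mul' k (Tpow k H (n + 1))
        ∘ₗ TensorProduct.map (iterComul k H n ∘ₗ twistedAntipode k H δ) (appendEnd k H σ n) :
      H ⊗[k] Tpow k H n →ₗ[k] Tpow k H (n + 1))

variable (A : Type) [Ring A] [Algebra k A]

/-- Given an action `ρ` of `H` on `A` and slot values `x = (x¹, …, xⁿ)`, the linear map
`H^{⊗n} → A` sending an elementary tensor `k¹ ⊗ … ⊗ kⁿ` to the product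
`k¹(x¹) ⋯ kⁿ(xⁿ)` (for `n = 0` it is `c ↦ c·1`). -/
noncomputable def actProd (ρ : H →ₗ[k] A →ₗ[k] A) :
    (n : ℕ) → (Fin n → A) → Tpow k H n →ₗ[k] A
  | 0, _ => (Algebra.linearMap k A : k →ₗ[k] A)
  | n + 1, x =>
    (LinearMap.mul' k A
        ∘ₗ TensorProduct.map (ρ.flip (x 0)) (actProd ρ n (fun i => x i.succ)) :
      H ⊗[k] Tpow k H n →ₗ[k] A)

section Aux

/-- The identity of `H ⊗ H^{⊗n}` viewed as a linear map onto `H^{⊗(n+1)}`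
(the two types are definitionally equal). -/
noncomputable def tpcast (n : ℕ) : (H ⊗[k] Tpow k H n) →ₗ[k] Tpow k H (n+1) where
  toFun v := show H ⊗[k] Tpow k H n from v
  map_add' _ _ := rfl
  map_smul' _ _ := rfl

variable {k H A} {ρ : H →ₗ[k] A →ₗ[k] A}

lemma tpow_mul_tmul (n : ℕ) (a b : H) (s t : Tpow k H n) :
    tpcast k H n (a ⊗ₜ[k] s) * tpcast k H n (b ⊗ₜ[k] t)
      = tpcast k H n ((a * b) ⊗ₜ[k] (s * t)) :=
  Algebra.TensorProduct.tmul_mul_tmul a b s t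

lemma el_succ (n : ℕ) (f : Fin (n+1) → H) :
    el k H (n+1) f = tpcast k H n (f 0 ⊗ₜ[k] el k H n (fun i => f i.succ)) := rfl

lemma el_zero (g : Fin 0 → H) : el k H 0 g = (1 : Tpow k H 0) := rfl

noncomputable def myprod : (n : ℕ) → (Fin n → A) → A
  | 0, _ => 1
  | n + 1, y => y 0 * myprod n (fun i => y i.succ)

lemma actProd_tmul (n : ℕ) (x : Fin (n+1) → A) (h : H) (t : Tpow k H n) :
    actProd k H A ρ (n+1) x (tpcast k H n (h ⊗ₜ[k] t))
      = ρ h (x 0) * actProd k H A ρ n (fun i => x i.succ) t := rfl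

lemma actProd_zero (x : Fin 0 → A) (c : Tpow k H 0) :
    actProd k H A ρ 0 x c = algebraMap k A c := rfl

lemma appendEnd_tmul (a : H) (n : ℕ) (h : H) (t : Tpow k H n) :
    appendEnd k H a (n+1) (tpcast k H n (h ⊗ₜ[k] t))
      = tpcast k H (n+1) (h ⊗ₜ[k] appendEnd k H a n t) := rfl

lemma iterComul_zero (h : H) :
    iterComul k H 0 h = tpcast k H 0 (h ⊗ₜ[k] (1 : k)) := rfl

lemma iterComul_succ (n : ℕ) (h : H) :
    iterComul k H (n+1) h
      = tpcast k H (n+1)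
          (TensorProduct.map LinearMap.id (iterComul k H n) (Coalgebra.comul h)) := rfl

lemma cyc_tmul (δ : H →ₐ[k] k) (σ : H) (n : ℕ) (h : H) (t : Tpow k H n) :
    cyc k H δ σ (n+1) (tpcast k H n (h ⊗ₜ[k] t))
      = iterComul k H n (twistedAntipode k H δ h) * appendEnd k H σ n t := rfl

lemma actProd_mul_el (hact : ∀ (g h : H) (a : A), ρ (g * h) a = ρ g (ρ h a)) :
    ∀ (n : ℕ) (x : Fin n → A) (g : Fin n → H) (u : Tpow k H n),
      actProd k H A ρ n x (u * el k H n g)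
        = actProd k H A ρ n (fun i => ρ (g i) (x i)) u
  | 0, x, g, u => by
      rw [el_zero, mul_one]; rfl
  | n + 1, x, g, u => by
      refine TensorProduct.induction_on
        (motive := fun (v : H ⊗[k] Tpow k H n) =>
          actProd k H A ρ (n+1) x (tpcast k H n v * el k H (n+1) g)
            = actProd k H A ρ (n+1) (fun i => ρ (g i) (x i)) (tpcast k H n v))
        u ?_ ?_ ?_
      · beta_reduce
        rw [map_zero, zero_mul, map_zero, map_zero]
      · intro h t
        beta_reduce
        rw [el_succ, tpow_mul_tmul, actProd_tmul, actProd_tmul,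
          actProd_mul_el hact n _ _ t, hact]
      · intro u v hu hv
        beta_reduce
        rw [map_add, add_mul, map_add, map_add, hu, hv]

lemma actProd_el :
    ∀ (n : ℕ) (x : Fin n → A) (g : Fin n → H),
      actProd k H A ρ n x (el k H n g) = myprod n (fun i => ρ (g i) (x i))
  | 0, x, g => by
      rw [el_zero, actProd_zero]; exact map_one (algebraMap k A)
  | n + 1, x, g => by
      rw [el_succ, actProd_tmul, actProd_el n]; rfl

lemma appendEnd_el (a : H) :
    ∀ (n : ℕ) (g : Fin n → H),
      appendEnd k H a n (el k H n g) = el k H (n+1) (Fin.snoc g a)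
  | 0, g => by
      have h0 : Fin.snoc (α := fun _ => H) g a (0 : Fin 1) = a := by
        have : (0 : Fin 1) = Fin.last 0 := rfl
        rw [this, Fin.snoc_last]
      rw [el_succ, h0]
      show (1 : k) • (a ⊗ₜ[k] (1 : k)) = tpcast k H 0 (a ⊗ₜ[k] el k H 0 _)
      rw [one_smul]
      rfl
  | n + 1, g => by
      have h0 : Fin.snoc (α := fun _ => H) g a (0 : Fin (n+2)) = g 0 := by
        have : (0 : Fin (n+2)) = Fin.castSucc 0 := rfl
        rw [this, Fin.snoc_castSucc]
      have htail : (fun i : Fin (n+1) => Fin.snoc (α := fun _ => H) g a i.succ)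
          = Fin.snoc (α := fun _ => H) (fun i : Fin n => g i.succ) a := by
        funext i
        refine Fin.lastCases ?_ (fun j => ?_) i
        · simp [Fin.succ_last]
        · simp [Fin.succ_castSucc, -Fin.castSucc_succ]
      rw [el_succ n g, appendEnd_tmul, appendEnd_el a n,
        el_succ (n+1) (Fin.snoc g a), h0, htail]

lemma actProd_iterComul
    (hleibniz : ∀ (h : H) (a b : A),
      ρ h (a * b)
        = LinearMap.mul' k A
            (TensorProduct.map (ρ.flip a) (ρ.flip b) (Coalgebra.comul h))) :
    ∀ (n : ℕ) (y : Fin (n+1) → A) (h : H),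
      actProd k H A ρ (n+1) y (iterComul k H n h) = ρ h (myprod (n+1) y)
  | 0, y, h => by
      show ρ h (y 0) * algebraMap k A (1 : k) = ρ h (myprod (0+1) y); rw [map_one]
      show ρ h (y 0) * 1 = ρ h (y 0 * 1)
      rw [mul_one, mul_one]
  | n + 1, y, h => by
      rw [iterComul_succ,
        show myprod (n+2) y = y 0 * myprod (n+1) (fun i => y i.succ) from rfl,
        hleibniz]
      refine TensorProduct.induction_on
        (motive := fun (c : H ⊗[k] H) =>
          actProd k H A ρ (n+2) y
              (tpcast k H (n+1) (TensorProduct.map LinearMap.id (iterComul k H n) c))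
            = LinearMap.mul' k A
                (TensorProduct.map (ρ.flip (y 0))
                  (ρ.flip (myprod (n+1) (fun i => y i.succ))) c))
        (Coalgebra.comul h) ?_ ?_ ?_
      · beta_reduce
        simp only [map_zero]
      · intro a b
        beta_reduce
        rw [TensorProduct.map_tmul, TensorProduct.map_tmul, LinearMap.id_apply,
          LinearMap.mul'_apply, actProd_tmul, actProd_iterComul hleibniz n]
        rfl
      · intro u v hu hv
        beta_reduce
        simp only [map_add, hu, hv]

lemma myprod_snoc :
    ∀ (n : ℕ) (y : Fin n → A) (z : A),
      myprod (n+1) (Fin.snoc y z) = myprod n y * z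
  | 0, y, z => by
      have h0 : Fin.snoc (α := fun _ => A) y z (0 : Fin 1) = z := by
        have : (0 : Fin 1) = Fin.last 0 := rfl
        rw [this, Fin.snoc_last]
      show Fin.snoc (α := fun _ => A) y z 0
          * myprod 0 (fun i => Fin.snoc (α := fun _ => A) y z i.succ) = myprod 0 y * z
      rw [h0]
      show z * 1 = 1 * z
      rw [mul_one, one_mul]
  | n + 1, y, z => by
      have h0 : Fin.snoc (α := fun _ => A) y z (0 : Fin (n+2)) = y 0 := by
        have : (0 : Fin (n+2)) = Fin.castSucc 0 := rfl
        rw [this, Fin.snoc_castSucc]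
      have htail : (fun i : Fin (n+1) => Fin.snoc (α := fun _ => A) y z i.succ)
          = Fin.snoc (α := fun _ => A) (fun i : Fin n => y i.succ) z := by
        funext i
        refine Fin.lastCases ?_ (fun j => ?_) i
        · simp [Fin.succ_last]
        · simp [Fin.succ_castSucc, -Fin.castSucc_succ]
      show Fin.snoc (α := fun _ => A) y z 0
          * myprod (n+1) (fun i => Fin.snoc (α := fun _ => A) y z i.succ) = _
      rw [h0, htail, myprod_snoc n,
        show myprod (n+1) y = y 0 * myprod n (fun i => y i.succ) from rfl, mul_assoc]

end Aux

/-- Let `τ` be a `δ`-invariant `σ`-trace on an `H`-module algebra `A` and, for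
`h¹, …, hⁿ ∈ H`, let `γ(h¹ ⊗ … ⊗ hⁿ)(x⁰, …, xⁿ) = τ(x⁰ h¹(x¹) ⋯ hⁿ(xⁿ))`.  Then `γ`
intertwines the cyclic operator with the cyclic permutation of the arguments:
`γ(τₙ(h¹ ⊗ … ⊗ hⁿ))(x⁰, x¹, …, xⁿ) = γ(h¹ ⊗ … ⊗ hⁿ)(xⁿ, x⁰, …, x^{n-1})`
for every `n ≥ 1` (written `n = m + 1`) and all `x⁰, …, xⁿ ∈ A`. -/
theorem gamma_cyclic (ρ : H →ₗ[k] A →ₗ[k] A)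
    (hact : ∀ (g h : H) (a : A), ρ (g * h) a = ρ g (ρ h a))
    (hone : ∀ a : A, ρ 1 a = a)
    (hleibniz : ∀ (h : H) (a b : A),
      ρ h (a * b)
        = LinearMap.mul' k A
            (TensorProduct.map (ρ.flip a) (ρ.flip b) (Coalgebra.comul h)))
    (δ : H →ₐ[k] k) (σ : H)
    (hgrouplike : Coalgebra.comul (R := k) σ = σ ⊗ₜ[k] σ)
    (hcounit : Coalgebra.counit (R := k) σ = 1)
    (hmodular : δ σ = 1)
    (τ : A →ₗ[k] k)
    (htrace : ∀ a b : A, τ (a * b) = τ (b * ρ σ a))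
    (hinvariant : ∀ (h : H) (a b : A),
      τ (ρ h a * b) = τ (a * ρ (twistedAntipode k H δ h) b))
    (m : ℕ) (f : Fin (m + 1) → H) (x : Fin (m + 2) → A) :
    τ (x 0 * actProd k H A ρ (m + 1) (fun i => x i.succ)
          (cyc k H δ σ (m + 1) (el k H (m + 1) f)))
      = τ (x (Fin.last (m + 1))
          * actProd k H A ρ (m + 1) (fun i => x i.castSucc) (el k H (m + 1) f)) := by
  have hcyc : cyc k H δ σ (m+1) (el k H (m+1) f)
      = iterComul k H m (twistedAntipode k H δ (f 0))
          * el k H (m+1) (Fin.snoc (fun i : Fin m => f i.succ) σ) := by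
    rw [el_succ, cyc_tmul, appendEnd_el]
  rw [hcyc, actProd_mul_el hact, actProd_iterComul hleibniz, actProd_el]
  beta_reduce
  have hw : (fun i : Fin (m+1) =>
        ρ (Fin.snoc (α := fun _ => H) (fun j : Fin m => f j.succ) σ i) (x i.succ))
      = Fin.snoc (α := fun _ => A) (fun j : Fin m => ρ (f j.succ) (x j.succ.castSucc))
          (ρ σ (x (Fin.last (m+1)))) := by
    funext i
    refine Fin.lastCases ?_ (fun j => ?_) i
    · simp [Fin.succ_last]
    · simp [Fin.succ_castSucc, -Fin.castSucc_succ]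
  rw [hw, myprod_snoc, ← hinvariant]
  have hq : myprod (m+1) (fun i : Fin (m+1) => ρ (f i) (x i.castSucc))
      = ρ (f 0) (x 0)
          * myprod m (fun j : Fin m => ρ (f j.succ) (x j.succ.castSucc)) := by
    rw [show myprod (m+1) (fun i : Fin (m+1) => ρ (f i) (x i.castSucc))
        = ρ (f 0) (x ((0 : Fin (m+1)).castSucc))
            * myprod m (fun j : Fin m => ρ (f j.succ) (x (j.succ.castSucc))) from rfl,
      Fin.castSucc_zero]
  rw [htrace (x (Fin.last (m+1))), hq, mul_assoc]
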